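/- arXiv:2509.08911 — 3 statements merged into one kernel-verified Lean document; each statement's English description precedes it below -/
import Mathlib

section
/- The one-sided Jensen trace inequality fails for the convex function Φ(x) = |x| at level ε = 1: there exist 2×2 Hermitian matrices S and G with ‖G‖_op ≤ 1 such that tr[|S+G|] > tr[((I+G)/2)·|S+I| + ((I−G)/2)·|S−I|]. Concretely, for S = [[0,1],[1,0]] and G = [[1,0],[0,−1]] one has tr[|S+G|] = 2√2 while the right-hand side equals 2. -/
open Matrix

/-- The (Euclidean, i.e. `ℓ²`-operator) norm of a complex `d × d` matrix. -/
noncomputable def opNorm {d : ℕ} (A : Matrix (Fin d) (Fin d) ℂ) : ℝ :=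
  ‖Matrix.toEuclideanCLM (𝕜 := ℂ) A‖

/-- The matrix `S = [[0,1],[1,0]]`. -/
noncomputable def Smat : Matrix (Fin 2) (Fin 2) ℂ := !![0, 1; 1, 0]

/-- The matrix `G = [[1,0],[0,−1]]`. -/
noncomputable def Gmat : Matrix (Fin 2) (Fin 2) ℂ := !![1, 0; 0, -1]

lemma Smat_isHermitian : Smat.IsHermitian := by
  ext i j
  fin_cases i <;> fin_cases j <;>
    simp [Smat, Matrix.conjTranspose_apply]

lemma Gmat_isHermitian : Gmat.IsHermitian := by
  ext i j
  fin_cases i <;> fin_cases j <;>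
    simp [Gmat, Matrix.conjTranspose_apply]

/-- `tr[|S+G|]`, where `|·|` is the spectral absolute value. -/
noncomputable def lhs5 : ℝ :=
  (((Smat_isHermitian.add Gmat_isHermitian).cfc (fun x => |x|)).trace).re

/-- The matrix `((I+G)/2)·|S+I| + ((I−G)/2)·|S−I|`, with `|·|` the spectral absolute value. -/
noncomputable def rhsMat5 : Matrix (Fin 2) (Fin 2) ℂ :=
  (2 : ℝ)⁻¹ • ((1 + Gmat) * ((Smat_isHermitian.add Matrix.isHermitian_one).cfc (fun x => |x|))
    + (1 - Gmat) * ((Smat_isHermitian.sub Matrix.isHermitian_one).cfc (fun x => |x|)))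

/-- `tr[((I+G)/2)·|S+I| + ((I−G)/2)·|S−I|]`. -/
noncomputable def rhs5 : ℝ := (rhsMat5.trace).re

/-!
`S` and `G` are self-adjoint unitaries. Hence `‖G‖_op = 1`, and `-1 ≤ S ≤ 1` gives
`|S + I| = S + I` and `|S - I| = I - S`, so the right-hand side is `tr (I + G S) = 2`.
On the other hand `S` and `G` anticommute, so `(S + G)² = 2 I` and `|S + G| = √2 I`.
-/

open scoped MatrixOrder

lemma IsSelfAdjoint.mem_unitary_of_mul_self_eq_one {A : Type*} [Ring A] [StarRing A] {u : A}
    (hu : IsSelfAdjoint u) (h : u * u = 1) : u ∈ unitary A :=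
  Unitary.mem_iff.mpr ⟨by rw [hu.star_eq, h], by rw [hu.star_eq, h]⟩

section CStarAlgebra

variable {A : Type*} [CStarAlgebra A] [PartialOrder A] [StarOrderedRing A] [Nontrivial A]
  {u : A}

lemma IsSelfAdjoint.neg_one_le_of_mem_unitary (hu : IsSelfAdjoint u) (hU : u ∈ unitary A) :
    -1 ≤ u := by
  simpa [CStarRing.norm_of_mem_unitary hU] using hu.neg_algebraMap_norm_le_self

lemma IsSelfAdjoint.le_one_of_mem_unitary (hu : IsSelfAdjoint u) (hU : u ∈ unitary A) :
    u ≤ 1 := by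
  simpa [CStarRing.norm_of_mem_unitary hU] using hu.le_algebraMap_norm_self

lemma CFC.abs_add_one_of_mem_unitary (hu : IsSelfAdjoint u) (hU : u ∈ unitary A) :
    CFC.abs (u + 1) = u + 1 :=
  CFC.abs_of_nonneg _ (neg_le_iff_add_nonneg.mp (hu.neg_one_le_of_mem_unitary hU))

lemma CFC.abs_sub_one_of_mem_unitary (hu : IsSelfAdjoint u) (hU : u ∈ unitary A) :
    CFC.abs (u - 1) = 1 - u := by
  rw [CFC.abs_of_nonpos _ (sub_nonpos.mpr (hu.le_one_of_mem_unitary hU)), neg_sub]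

end CStarAlgebra

lemma CFC.abs_eq_algebraMap_sqrt {A : Type*} [CStarAlgebra A] [PartialOrder A]
    [StarOrderedRing A] {a : A} {c : NNReal} (h : star a * a = algebraMap NNReal A c) :
    CFC.abs a = algebraMap NNReal A (NNReal.sqrt c) := by
  rw [CFC.abs, h, CFC.sqrt_algebraMap]

lemma Matrix.IsHermitian.cfc_abs {n 𝕜 : Type*} [Fintype n] [DecidableEq n] [RCLike 𝕜]
    {M : Matrix n n 𝕜} (hM : M.IsHermitian) : hM.cfc (fun x => |x|) = CFC.abs M := by
  rw [CFC.abs_eq_cfc_norm M hM, hM.cfc_eq]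
  rfl

section PauliMatrices

open scoped Matrix.Norms.L2Operator

lemma Smat_mul_self : Smat * Smat = 1 := by
  ext i j; fin_cases i <;> fin_cases j <;> simp [Smat, Matrix.mul_apply]

lemma Gmat_mul_self : Gmat * Gmat = 1 := by
  ext i j; fin_cases i <;> fin_cases j <;> simp [Gmat, Matrix.mul_apply]

lemma Gmat_mul_Smat : Gmat * Smat = -(Smat * Gmat) := by
  ext i j; fin_cases i <;> fin_cases j <;> simp [Smat, Gmat, Matrix.mul_apply]

lemma trace_Gmat_mul_Smat : (Gmat * Smat).trace = 0 := by
  simp [Smat, Gmat, Matrix.trace]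

lemma Smat_mem_unitary : Smat ∈ unitary (Matrix (Fin 2) (Fin 2) ℂ) :=
  IsSelfAdjoint.mem_unitary_of_mul_self_eq_one Smat_isHermitian Smat_mul_self

lemma Gmat_mem_unitary : Gmat ∈ unitary (Matrix (Fin 2) (Fin 2) ℂ) :=
  IsSelfAdjoint.mem_unitary_of_mul_self_eq_one Gmat_isHermitian Gmat_mul_self

lemma star_Smat_add_Gmat_mul_self :
    star (Smat + Gmat) * (Smat + Gmat) = algebraMap NNReal _ 2 := by
  rw [(Smat_isHermitian.add Gmat_isHermitian).star_eq, add_mul, mul_add, mul_add, Smat_mul_self,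
    Gmat_mul_self, Gmat_mul_Smat, map_ofNat, add_assoc, add_neg_cancel_left, one_add_one_eq_two]

lemma lhs5_eq : lhs5 = 2 * Real.sqrt 2 := by
  rw [lhs5, Matrix.IsHermitian.cfc_abs, CFC.abs_eq_algebraMap_sqrt star_Smat_add_Gmat_mul_self,
    Algebra.algebraMap_eq_smul_one]
  simp [NNReal.smul_def, mul_comm]

lemma rhs5_eq : rhs5 = 2 := by
  rw [rhs5, rhsMat5, Matrix.IsHermitian.cfc_abs, Matrix.IsHermitian.cfc_abs,
    CFC.abs_add_one_of_mem_unitary Smat_isHermitian Smat_mem_unitary,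
    CFC.abs_sub_one_of_mem_unitary Smat_isHermitian Smat_mem_unitary]
  have hsum : (1 + Gmat) * (Smat + 1) + (1 - Gmat) * (1 - Smat) =
      (2 : ℕ) • (1 + Gmat * Smat) := by
    noncomm_ring
  rw [hsum, Matrix.trace_smul, Matrix.trace_smul, Matrix.trace_add, trace_Gmat_mul_Smat,
    Matrix.trace_one]
  norm_num

lemma opNorm_Gmat : opNorm Gmat = 1 := by
  rw [opNorm, ← Matrix.cstar_norm_def]
  exact CStarRing.norm_of_mem_unitary Gmat_mem_unitary

end PauliMatrices

/-- **The one-sided Jensen trace inequality fails for the convex function `Φ(x) = |x|`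
at level `ε = 1`.** For `S = [[0,1],[1,0]]` and `G = [[1,0],[0,−1]]` one has `‖G‖_op ≤ 1`,
`tr[|S+G|] = 2√2`, `tr[((I+G)/2)·|S+I| + ((I−G)/2)·|S−I|] = 2`, hence `RHS < LHS`. -/
theorem stmt_5 : opNorm Gmat ≤ 1 ∧ lhs5 = 2 * Real.sqrt 2 ∧ rhs5 = 2 ∧ rhs5 < lhs5 := by
  refine ⟨opNorm_Gmat.le, lhs5_eq, rhs5_eq, ?_⟩
  rw [lhs5_eq, rhs5_eq]
  linarith [Real.one_lt_sqrt_two]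
end

section
/- Let ε > 0 and for each t ∈ ℕ₊ let Φ_t : ℝ → ℝ be convex and satisfy: (1) for all t ≥ 1 and s ∈ ℝ, (1/2)[Φ_{t+1}(s+ε) + Φ_{t+1}(s−ε)] ≤ Φ_t(s); and (2) for all t ≥ 1 and all d×d Hermitian S, G with ‖G‖_op ≤ ε, tr[Φ_t(S−G)] ≤ tr[((εI−G)/(2ε))Φ_t(S+εI) + ((εI+G)/(2ε))Φ_t(S−εI)]. Given any sequence of d×d Hermitian loss matrices G₁, G₂, … with ‖G_t‖_op ≤ ε, define S₁ = 0, S_{t+1} = S_t − G_t, and X_t = (1/(2ε))[Φ_t(S_t+εI) − Φ_t(S_t−εI)]. Then for all T ≥ 2 and every d×d Hermitian X with eigenvalues λ₁,…,λ_d: ∑_{t=1}^{T} ⟨G_t, X_t − X⟩ ≤ ⟨G₁, X₁⟩ + tr[Φ₁(−G₁)] + ∑_{i=1}^{d} Φ*_T(λᵢ), where Φ*_T(λ) := sup_{g∈ℝ}[gλ − Φ_T(g)] is the Fenchel conjugate of Φ_T and ⟨A,B⟩ = tr(AB) is the Frobenius inner product. -/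
open Matrix

/-- The real Frobenius inner product `⟨A, B⟩ = tr(AB)` of Hermitian matrices. -/
noncomputable def frobInner {d : ℕ} (A B : Matrix (Fin d) (Fin d) ℂ) : ℝ :=
  ((A * B).trace).re

lemma isHermitian_smul_one {d : ℕ} (r : ℝ) :
    (r • (1 : Matrix (Fin d) (Fin d) ℂ)).IsHermitian := by
  simp [Matrix.IsHermitian, Matrix.conjTranspose_smul]

/-!
Write `Ψ_t = tr Φ_t(S_{t+1})`. The trace Jensen hypothesis, after expanding its right-hand side,
says `⟨G_t, X_t⟩ + tr Φ_t(S_t − G_t) ≤ ½ (tr Φ_t(S_t + εI) + tr Φ_t(S_t − εI))`, and the scalar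
recursion applied to the eigenvalues of `S_t` bounds the right-hand side at time `t + 1` by `Ψ_t`.
Hence `⟨G_{t+1}, X_{t+1}⟩ + Ψ_{t+1} ≤ Ψ_t`, which telescopes to
`∑_{t ≤ T} ⟨G_t, X_t⟩ + Ψ_T ≤ ⟨G₁, X₁⟩ + Ψ₁`, with `Ψ₁ = tr Φ₁(−G₁)`.
Since `∑_{t ≤ T} G_t = −S_{T+1}`, the comparator term is `⟨S_{T+1}, X⟩`, and the matrix
Fenchel–Young inequality `⟨S, X⟩ ≤ tr Φ_T(S) + ∑ᵢ Φ*_T(λᵢ)` finishes the proof. The latter follows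
from Peierls' inequality: the diagonal `g` of `S` in an eigenbasis of `X` satisfies
`⟨S, X⟩ = ∑ᵢ gᵢ λᵢ` and, `g` being a doubly stochastic average of the eigenvalues of `S`,
`∑ᵢ Φ_T(gᵢ) ≤ tr Φ_T(S)`.
-/

lemma EReal.coe_finset_sum {ι : Type*} (s : Finset ι) (f : ι → ℝ) :
    ((∑ i ∈ s, f i : ℝ) : EReal) = ∑ i ∈ s, (f i : EReal) :=
  map_sum (⟨⟨Real.toEReal, EReal.coe_zero⟩, EReal.coe_add⟩ : ℝ →+ EReal) f s

lemma eq_neg_sum_Icc_of_eq_sub {M : Type*} [AddCommGroup M] {S G : ℕ → M} (h₁ : S 1 = 0)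
    (hS : ∀ t, 1 ≤ t → S (t + 1) = S t - G t) (t : ℕ) :
    S (t + 1) = -∑ s ∈ Finset.Icc 1 t, G s := by
  induction t with
  | zero => simpa using h₁
  | succ t ih => rw [hS (t + 1) (by omega), ih, Finset.sum_Icc_succ_top (by omega)]; abel

lemma sum_Icc_add_le_of_add_le {a Ψ : ℕ → ℝ} (h : ∀ t, 1 ≤ t → a (t + 1) + Ψ (t + 1) ≤ Ψ t)
    {T : ℕ} (hT : 1 ≤ T) : ∑ t ∈ Finset.Icc 1 T, a t + Ψ T ≤ a 1 + Ψ 1 := by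
  induction T, hT using Nat.le_induction with
  | base => simp
  | succ T hT ih =>
    rw [Finset.sum_Icc_succ_top (by omega)]
    linarith [h T hT]

lemma sum_frobInner_sub {d : ℕ} (s : Finset ℕ) (G X : ℕ → Matrix (Fin d) (Fin d) ℂ)
    (Y : Matrix (Fin d) (Fin d) ℂ) :
    ∑ t ∈ s, frobInner (G t) (X t - Y)
      = ∑ t ∈ s, frobInner (G t) (X t) - frobInner (∑ t ∈ s, G t) Y := by
  simp [frobInner, mul_sub, Finset.sum_mul, trace_sum, Complex.re_sum, Finset.sum_sub_distrib]

namespace Matrix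

variable {𝕜 n : Type*} [RCLike 𝕜] [Fintype n] [DecidableEq n]

lemma re_trace_smul_mul_add_mul {ε : ℝ} (hε : ε ≠ 0) (G P M : Matrix n n 𝕜) :
    RCLike.re ((2 * ε)⁻¹ • ((ε • 1 - G) * P + (ε • 1 + G) * M)).trace
      = (RCLike.re P.trace + RCLike.re M.trace) / 2
        - RCLike.re (G * ((2 * ε)⁻¹ • (P - M))).trace := by
  have hmix : (ε • 1 - G) * P + (ε • 1 + G) * M = ε • (P + M) - G * (P - M) := by
    simp only [sub_mul, add_mul, smul_mul_assoc, one_mul, mul_sub, smul_add]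
    abel
  simp only [hmix, mul_smul_comm, trace_smul, trace_sub, trace_add, map_sub, map_add,
    RCLike.smul_re]
  field_simp

lemma sum_norm_sq_apply_col_of_mem_unitaryGroup {W : Matrix n n 𝕜} (hW : W ∈ unitaryGroup n 𝕜)
    (i : n) : ∑ j, ‖W j i‖ ^ 2 = 1 := by
  have h := congr_fun₂ (mem_unitaryGroup_iff'.mp hW) i i
  rw [mul_apply, one_apply_eq] at h
  simp_rw [star_apply, RCLike.star_def, RCLike.conj_mul] at h
  exact_mod_cast h

lemma sum_norm_sq_apply_row_of_mem_unitaryGroup {W : Matrix n n 𝕜} (hW : W ∈ unitaryGroup n 𝕜)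
    (j : n) : ∑ i, ‖W j i‖ ^ 2 = 1 := by
  have h := congr_fun₂ (mem_unitaryGroup_iff.mp hW) j j
  rw [mul_apply, one_apply_eq] at h
  simp_rw [star_apply, RCLike.star_def, RCLike.mul_conj] at h
  exact_mod_cast h

lemma re_star_mul_diagonal_mul_apply_self (W : Matrix n n 𝕜) (μ : n → ℝ) (i : n) :
    RCLike.re ((star W * diagonal (RCLike.ofReal ∘ μ : n → 𝕜) * W) i i)
      = ∑ j, ‖W j i‖ ^ 2 * μ j := by
  rw [mul_apply, map_sum]
  refine Finset.sum_congr rfl fun j _ ↦ ?_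
  rw [mul_diagonal, star_apply, Function.comp_apply, RCLike.star_def, mul_right_comm,
    RCLike.conj_mul]
  norm_cast

namespace IsHermitian

variable {A B : Matrix n n 𝕜}

lemma cfc_congr (h : A = B) (hA : A.IsHermitian) (hB : B.IsHermitian) (f : ℝ → ℝ) :
    hA.cfc f = hB.cfc f := by
  subst h; rfl

lemma re_trace_cfc (hA : A.IsHermitian) (f : ℝ → ℝ) :
    RCLike.re (hA.cfc f).trace = ∑ i, f (hA.eigenvalues i) := by
  rw [IsHermitian.cfc, Unitary.conjStarAlgAut_apply, trace_mul_cycle,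
    Unitary.star_mul_self_of_mem (SetLike.coe_mem _), one_mul, trace_diagonal, map_sum]
  simp

lemma cfc_add_smul_one (hA : A.IsHermitian) (r : ℝ) (hB : (A + r • 1).IsHermitian)
    (f : ℝ → ℝ) : hB.cfc f = hA.cfc (fun x ↦ f (x + r)) := by
  have hfin := A.finite_real_spectrum
  rw [← hB.cfc_eq, ← hA.cfc_eq, cfc_comp' f (· + r) A ((hfin.image _).continuousOn f)
    (hfin.continuousOn _) hA.isSelfAdjoint, cfc_add_const r (fun x ↦ x) A (hfin.continuousOn _)
    hA.isSelfAdjoint, cfc_id' ℝ A, Algebra.algebraMap_eq_smul_one]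

lemma cfc_sub_smul_one (hA : A.IsHermitian) (r : ℝ) (hB : (A - r • 1).IsHermitian)
    (f : ℝ → ℝ) : hB.cfc f = hA.cfc (fun x ↦ f (x - r)) := by
  have h : A - r • (1 : Matrix n n 𝕜) = A + (-r) • 1 := by rw [neg_smul, sub_eq_add_neg]
  convert hA.cfc_add_smul_one (-r) (h ▸ hB) f using 2
  simp [sub_eq_add_neg]

lemma re_trace_cfc_add_add_cfc_sub_le (hA : A.IsHermitian) {ε : ℝ}
    (hP : (A + ε • 1).IsHermitian) (hM : (A - ε • 1).IsHermitian) {f g : ℝ → ℝ}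
    (hfg : ∀ s, (f (s + ε) + f (s - ε)) / 2 ≤ g s) :
    (RCLike.re (hP.cfc f).trace + RCLike.re (hM.cfc f).trace) / 2
      ≤ RCLike.re (hA.cfc g).trace := by
  rw [hA.cfc_add_smul_one ε hP, hA.cfc_sub_smul_one ε hM, re_trace_cfc, re_trace_cfc,
    re_trace_cfc, ← Finset.sum_add_distrib, Finset.sum_div]
  exact Finset.sum_le_sum fun i _ ↦ hfg _

lemma re_trace_mul_eq_sum (hB : B.IsHermitian) (A : Matrix n n 𝕜) :
    RCLike.re (A * B).trace = ∑ i, RCLike.re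
      ((star (hB.eigenvectorUnitary : Matrix n n 𝕜) * A * hB.eigenvectorUnitary) i i)
        * hB.eigenvalues i := by
  conv_lhs => rw [hB.spectral_theorem, Unitary.conjStarAlgAut_apply]
  rw [← Matrix.mul_assoc, ← Matrix.mul_assoc, trace_mul_comm, ← Matrix.mul_assoc,
    ← Matrix.mul_assoc]
  simp only [trace, diag, mul_diagonal, map_sum, Function.comp_apply, RCLike.re_mul_ofReal]

/-- Peierls' inequality. -/
lemma sum_convexOn_diag_conj_le (hA : A.IsHermitian) (U : unitaryGroup n 𝕜) {f : ℝ → ℝ}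
    (hf : ConvexOn ℝ Set.univ f) :
    ∑ i, f (RCLike.re ((star (U : Matrix n n 𝕜) * A * (U : Matrix n n 𝕜)) i i))
      ≤ ∑ j, f (hA.eigenvalues j) := by
  set W : unitaryGroup n 𝕜 := star hA.eigenvectorUnitary * U
  have hconj : star (U : Matrix n n 𝕜) * A * (U : Matrix n n 𝕜)
      = star (W : Matrix n n 𝕜) * diagonal (RCLike.ofReal ∘ hA.eigenvalues : n → 𝕜)
        * (W : Matrix n n 𝕜) := by
    conv_lhs => rw [hA.spectral_theorem, Unitary.conjStarAlgAut_apply]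
    simp [W, Matrix.mul_assoc]
  calc ∑ i, f (RCLike.re ((star (U : Matrix n n 𝕜) * A * (U : Matrix n n 𝕜)) i i))
      ≤ ∑ i, ∑ j, ‖(W : Matrix n n 𝕜) j i‖ ^ 2 * f (hA.eigenvalues j) := by
        refine Finset.sum_le_sum fun i _ ↦ ?_
        rw [hconj, re_star_mul_diagonal_mul_apply_self]
        exact hf.map_sum_le (fun j _ ↦ by positivity)
          (sum_norm_sq_apply_col_of_mem_unitaryGroup W.2 i) (fun j _ ↦ Set.mem_univ _)
    _ = ∑ j, f (hA.eigenvalues j) := by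
        rw [Finset.sum_comm]
        simp_rw [← Finset.sum_mul, sum_norm_sq_apply_row_of_mem_unitaryGroup W.2, one_mul]

/-- Fenchel–Young inequality for the trace functional `A ↦ tr f(A)`. -/
lemma re_trace_mul_sub_le_sum_iSup (hA : A.IsHermitian) (hB : B.IsHermitian) {f : ℝ → ℝ}
    (hf : ConvexOn ℝ Set.univ f) :
    ((RCLike.re (A * B).trace - RCLike.re (hA.cfc f).trace : ℝ) : EReal)
      ≤ ∑ i, ⨆ g : ℝ, ((g * hB.eigenvalues i - f g : ℝ) : EReal) := by
  set g : n → ℝ := fun i ↦ RCLike.re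
    ((star (hB.eigenvectorUnitary : Matrix n n 𝕜) * A * hB.eigenvectorUnitary) i i)
  have hle : RCLike.re (A * B).trace - RCLike.re (hA.cfc f).trace
      ≤ ∑ i, (g i * hB.eigenvalues i - f (g i)) := by
    rw [hB.re_trace_mul_eq_sum, hA.re_trace_cfc, Finset.sum_sub_distrib]
    linarith [hA.sum_convexOn_diag_conj_le hB.eigenvectorUnitary hf]
  refine (EReal.coe_le_coe_iff.mpr hle).trans ?_
  rw [EReal.coe_finset_sum]
  exact Finset.sum_le_sum fun i _ ↦
    le_iSup (fun g : ℝ ↦ ((g * hB.eigenvalues i - f g : ℝ) : EReal)) (g i)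

end IsHermitian

end Matrix

/-- **Master regret bound for the matrix potential method.**
If the convex potentials `Φ_t` satisfy the one-dimensional recursion
`(Φ_{t+1}(s+ε) + Φ_{t+1}(s−ε))/2 ≤ Φ_t(s)` and the one-sided Jensen trace inequality, then the
iterates `S₁ = 0`, `S_{t+1} = S_t − G_t`, `X_t = (1/(2ε))[Φ_t(S_t+εI) − Φ_t(S_t−εI)]` satisfy,
for every `T ≥ 2` and Hermitian comparator `X` with eigenvalues `λ₁, …, λ_d`,
`∑_{t=1}^T ⟨G_t, X_t − X⟩ ≤ ⟨G₁, X₁⟩ + tr[Φ₁(−G₁)] + ∑ᵢ Φ*_T(λᵢ)`, where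
`Φ*_T(λ) = sup_g (gλ − Φ_T(g))` is the Fenchel conjugate (valued in `EReal`). -/
theorem stmt_11 (d : ℕ) (ε : ℝ) (hε : 0 < ε) (Φ : ℕ → ℝ → ℝ)
    (hconv : ∀ t, 1 ≤ t → ConvexOn ℝ Set.univ (Φ t))
    (hcond1 : ∀ t, 1 ≤ t → ∀ s : ℝ, (Φ (t + 1) (s + ε) + Φ (t + 1) (s - ε)) / 2 ≤ Φ t s)
    (hcond2 : ∀ t, 1 ≤ t → ∀ (S G : Matrix (Fin d) (Fin d) ℂ)
        (hS : S.IsHermitian) (hG : G.IsHermitian), opNorm G ≤ ε →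
        (((hS.sub hG).cfc (Φ t)).trace).re ≤
          (((2 * ε)⁻¹ • ((ε • (1 : Matrix (Fin d) (Fin d) ℂ) - G) *
                ((hS.add (isHermitian_smul_one ε)).cfc (Φ t))
              + (ε • (1 : Matrix (Fin d) (Fin d) ℂ) + G) *
                ((hS.sub (isHermitian_smul_one ε)).cfc (Φ t)))).trace).re)
    (G : ℕ → Matrix (Fin d) (Fin d) ℂ)
    (hGherm : ∀ t, (G t).IsHermitian) (hGle : ∀ t, opNorm (G t) ≤ ε)
    (Smat : ℕ → Matrix (Fin d) (Fin d) ℂ)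
    (hSherm : ∀ t, (Smat t).IsHermitian)
    (hS1 : Smat 1 = 0) (hSrec : ∀ t, 1 ≤ t → Smat (t + 1) = Smat t - G t)
    (X : ℕ → Matrix (Fin d) (Fin d) ℂ)
    (hX : ∀ t, 1 ≤ t → X t = (2 * ε)⁻¹ •
        (((hSherm t).add (isHermitian_smul_one ε)).cfc (Φ t)
          - ((hSherm t).sub (isHermitian_smul_one ε)).cfc (Φ t)))
    (T : ℕ) (hT : 2 ≤ T)
    (Xc : Matrix (Fin d) (Fin d) ℂ) (hXc : Xc.IsHermitian) :
    ((∑ t ∈ Finset.Icc 1 T, frobInner (G t) (X t - Xc) : ℝ) : EReal) ≤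
      ((frobInner (G 1) (X 1) + ((((hGherm 1).neg).cfc (Φ 1)).trace).re : ℝ) : EReal)
        + ∑ i : Fin d, ⨆ g : ℝ, ((g * hXc.eigenvalues i - Φ T g : ℝ) : EReal) := by
  set Ψ : ℕ → ℝ := fun t ↦ (((hSherm (t + 1)).cfc (Φ t)).trace).re
  have hstep : ∀ t, 1 ≤ t → frobInner (G (t + 1)) (X (t + 1)) + Ψ (t + 1) ≤ Ψ t := by
    intro t ht
    have hjensen := hcond2 (t + 1) (by omega) _ _ (hSherm (t + 1)) (hGherm (t + 1)) (hGle (t + 1))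
    have hrecursion := (hSherm (t + 1)).re_trace_cfc_add_add_cfc_sub_le
      ((hSherm (t + 1)).add (isHermitian_smul_one ε))
      ((hSherm (t + 1)).sub (isHermitian_smul_one ε)) (hcond1 t ht)
    dsimp only [Ψ]
    rw [IsHermitian.cfc_congr (hSrec (t + 1) (by omega)) _ ((hSherm _).sub (hGherm _))]
    unfold frobInner
    simp only [← RCLike.re_to_complex] at hjensen ⊢
    rw [re_trace_smul_mul_add_mul hε.ne', ← hX _ (by omega)] at hjensen
    linarith
  have hΨ₁ : Ψ 1 = ((((hGherm 1).neg).cfc (Φ 1)).trace).re := by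
    dsimp only [Ψ]
    rw [IsHermitian.cfc_congr (by simp [hSrec 1 le_rfl, hS1]) _ (hGherm 1).neg]
  have hregret :=
    sum_Icc_add_le_of_add_le (a := fun t ↦ frobInner (G t) (X t)) hstep (by omega : 1 ≤ T)
  have hfenchel := (hSherm (T + 1)).re_trace_mul_sub_le_sum_iSup hXc (hconv T (by omega))
  rw [sum_frobInner_sub, ← neg_neg (∑ t ∈ Finset.Icc 1 T, G t),
    ← eq_neg_sum_Icc_of_eq_sub hS1 hSrec]
  refine le_trans ?_ (add_le_add le_rfl hfenchel)
  rw [← EReal.coe_add, EReal.coe_le_coe_iff]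
  have hcomparator : frobInner (-Smat (T + 1)) Xc = -RCLike.re (Smat (T + 1) * Xc).trace := by
    simp [frobInner]
  have hΨT : Ψ T = RCLike.re ((hSherm (T + 1)).cfc (Φ T)).trace := rfl
  linarith
end

section
/- Let d ≥ 1 and let λ₁,…,λ_d ≥ 0 satisfy ∑_{i=1}^{d} λᵢ = 1. Then ∑_{i=1}^{d} λᵢ·√(log(1 + λᵢ·d)) ≤ √(1 + ∑_{i=1}^{d} λᵢ·log(λᵢ·d)), where terms with λᵢ = 0 are interpreted as 0. Equivalently, for X in the spectraplex Δ_{d×d} with eigenvalues λ₁,…,λ_d, one has ∑ᵢ λᵢ√(log(1+λᵢd)) ≤ √(1 + S(X‖d⁻¹I_d)). -/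
/-! The concavity of `√` (Jensen, with the probability weights `λᵢ`) moves the square root
outside the sum, leaving `∑ᵢ λᵢ log(1 + λᵢd)` to be bounded. Termwise,
`log(1 + x) ≤ 1/x + log x` with `x = λᵢd` gives `λᵢ log(1 + λᵢd) ≤ 1/d + λᵢ log(λᵢd)`,
and the `d` copies of `1/d` add up to the `1` under the root. -/

open Finset

namespace Real

theorem log_one_add_le_inv_add_log {x : ℝ} (hx : 0 < x) : log (1 + x) ≤ x⁻¹ + log x := by
  have h : log ((1 + x) / x) ≤ (1 + x) / x - 1 := log_le_sub_one_of_pos (by positivity)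
  rw [log_div (by positivity) hx.ne'] at h
  have hquot : (1 + x) / x - 1 = x⁻¹ := by field_simp; ring
  linarith

theorem mul_log_one_add_mul_le {t c : ℝ} (ht : 0 ≤ t) (hc : 0 ≤ c) :
    t * log (1 + t * c) ≤ c⁻¹ + t * log (t * c) := by
  rcases (mul_nonneg ht hc).eq_or_lt with htc | htc
  · rcases mul_eq_zero.mp htc.symm with rfl | rfl <;> simp [hc]
  · calc t * log (1 + t * c) ≤ t * ((t * c)⁻¹ + log (t * c)) :=
          mul_le_mul_of_nonneg_left (log_one_add_le_inv_add_log htc) ht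
      _ = c⁻¹ + t * log (t * c) := by
          have ht' : t ≠ 0 := by rintro rfl; simp at htc
          field_simp

theorem sum_mul_sqrt_le_sqrt_sum_mul {ι : Type*} {s : Finset ι} {w f : ι → ℝ}
    (hw : ∀ i ∈ s, 0 ≤ w i) (hw₁ : ∑ i ∈ s, w i = 1) (hf : ∀ i ∈ s, 0 ≤ f i) :
    ∑ i ∈ s, w i * √(f i) ≤ √(∑ i ∈ s, w i * f i) :=
  strictConcaveOn_sqrt.concaveOn.le_map_sum hw hw₁ hf

theorem sum_mul_sqrt_log_one_add_mul_card_le {ι : Type*} [Fintype ι] {p : ι → ℝ}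
    (hp : ∀ i, 0 ≤ p i) (hp₁ : ∑ i, p i = 1) :
    ∑ i, p i * √(log (1 + p i * Fintype.card ι)) ≤
      √(1 + ∑ i, p i * log (p i * Fintype.card ι)) := by
  set n : ℝ := (Fintype.card ι : ℝ)
  have hn : 0 ≤ n := Nat.cast_nonneg _
  have hlog : ∀ i ∈ univ, 0 ≤ log (1 + p i * n) := fun i _ =>
    log_nonneg (by nlinarith [hp i])
  refine (sum_mul_sqrt_le_sqrt_sum_mul (fun i _ => hp i) hp₁ hlog).trans (sqrt_le_sqrt ?_)
  calc ∑ i, p i * log (1 + p i * n)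
      ≤ ∑ i, (n⁻¹ + p i * log (p i * n)) :=
        sum_le_sum fun i _ => mul_log_one_add_mul_le (hp i) hn
    _ = n * n⁻¹ + ∑ i, p i * log (p i * n) := by
        rw [sum_add_distrib, sum_const, card_univ, nsmul_eq_mul]
    _ ≤ 1 + ∑ i, p i * log (p i * n) := by gcongr; exact mul_inv_le_one

end Real

theorem stmt_18_general (d : ℕ) (lam : Fin d → ℝ)
    (hnonneg : ∀ i, 0 ≤ lam i) (hsum : ∑ i, lam i = 1) :
    ∑ i, lam i * Real.sqrt (Real.log (1 + lam i * d)) ≤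
      Real.sqrt (1 + ∑ i, lam i * Real.log (lam i * d)) := by
  simpa using Real.sum_mul_sqrt_log_one_add_mul_card_le hnonneg hsum

/-- **Entropy-type Cauchy–Schwarz bound on the spectrum of a density matrix.**
If `λ₁,…,λ_d ≥ 0` sum to `1`, then
`∑ᵢ λᵢ·√(log(1 + λᵢd)) ≤ √(1 + ∑ᵢ λᵢ·log(λᵢd))`; the right-hand sum is the quantum
relative entropy `S(X‖d⁻¹I_d)` of a state with spectrum `λ₁,…,λ_d` (terms with `λᵢ = 0`
vanish, automatically since `Real.log 0 = 0`). -/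
theorem stmt_18 (d : ℕ) (hd : 1 ≤ d) (lam : Fin d → ℝ)
    (hnonneg : ∀ i, 0 ≤ lam i) (hsum : ∑ i, lam i = 1) :
    ∑ i, lam i * Real.sqrt (Real.log (1 + lam i * d)) ≤
      Real.sqrt (1 + ∑ i, lam i * Real.log (lam i * d)) :=
  stmt_18_general d lam hnonneg hsum
end
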